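/- For every v ∈ M = ℝ × L × ℝ one has Φ̂(Φ(v)) = −v and Φ(Φ̂(v)) = −v; that is, the cohomological relative Fourier–Mukai transforms satisfy Φ̂ ∘ Φ = −id and Φ ∘ Φ̂ = −id (reflecting the isomorphisms Φ̂Φ[1] ≅ id ≅ ΦΦ̂[1] of functors). -/
import Mathlib


/-- Cohomological relative Fourier–Mukai transform `Φ` on `M = ℝ × L × ℝ`. -/
noncomputable def PhiFM {L : Type*} [AddCommGroup L] [Module ℝ L] (e : ℝ)
    (B : L →ₗ[ℝ] L →ₗ[ℝ] ℝ) (Θ f : L) (v : ℝ × L × ℝ) : ℝ × L × ℝ :=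
  (B f v.2.1,
    -v.2.1 + (B f v.2.1 - v.1) • Θ +
      (B Θ v.2.1 + e / 2 * B f v.2.1 + v.2.2) • f,
    -(B Θ v.2.1 + e * B f v.2.1 - e / 2 * v.1))

/-- Cohomological relative Fourier–Mukai transform `Φ̂` on `M = ℝ × L × ℝ`. -/
noncomputable def PhiHatFM {L : Type*} [AddCommGroup L] [Module ℝ L] (e : ℝ)
    (B : L →ₗ[ℝ] L →ₗ[ℝ] ℝ) (Θ f : L) (v : ℝ × L × ℝ) : ℝ × L × ℝ :=
  (B f v.2.1,
    v.2.1 - (B f v.2.1 + v.1) • Θ +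
      (-B Θ v.2.1 - e / 2 * B f v.2.1 + v.2.2) • f,
    -(B Θ v.2.1 + e * B f v.2.1 + e / 2 * v.1))

theorem stmt7 (e : ℝ) {L : Type*} [AddCommGroup L] [Module ℝ L]
    (B : L →ₗ[ℝ] L →ₗ[ℝ] ℝ) (hsymm : ∀ x y : L, B x y = B y x)
    (Θ f : L) (hΘΘ : B Θ Θ = -e) (hΘf : B Θ f = 1) (hff : B f f = 0) :
    ∀ v : ℝ × L × ℝ,
      PhiHatFM e B Θ f (PhiFM e B Θ f v) = -v ∧
      PhiFM e B Θ f (PhiHatFM e B Θ f v) = -v := by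
  have hfΘ : B f Θ = 1 := by rw [hsymm]; exact hΘf
  rintro ⟨n, D, s⟩
  constructor <;>
  · simp only [PhiFM, PhiHatFM, Prod.mk.injEq, Prod.neg_mk, map_add, map_neg, map_sub,
      map_smul, LinearMap.add_apply, LinearMap.neg_apply, LinearMap.sub_apply,
      LinearMap.smul_apply, smul_eq_mul, hΘΘ, hΘf, hfΘ, hff]
    refine ⟨by ring, ?_, by ring⟩
    · module
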